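/- For a standard Gaussian random vector u ~ N(0, I_d) and any real γ ≥ 2, E[||u||^γ] ≤ (d+γ)^{γ/2}. -/

import Mathlib

/-!
For `p, t > 0` the elementary inequality `x ≤ exp (x - 1)`, applied to `t a / p` and raised to
the power `p`, gives `a ^ p ≤ (p / t) ^ p * exp (-p) * exp (t a)`. Taking `a = ‖u‖ ^ 2`,
`p = γ / 2` and integrating bounds `E ‖u‖ ^ γ` by the moment generating function of the
chi-squared variable `‖u‖ ^ 2`, which is `(1 - 2 t) ^ (-d / 2)`. The choice
`t = γ / (2 (d + γ))` makes `p / t = d + γ` and `(1 - 2 t) ^ (-d / 2) = (1 + γ / d) ^ (d / 2)`,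
which is at most `exp (γ / 2)` and cancels the factor `exp (-γ / 2)`.
-/

open MeasureTheory ProbabilityTheory

/-- The standard Gaussian measure on `ℝ^d` (Euclidean), with i.i.d. `N(0,1)` coordinates. -/
noncomputable def stdGaussianE (d : ℕ) : Measure (EuclideanSpace ℝ (Fin d)) :=
  (Measure.pi fun _ => gaussianReal 0 1).map (MeasurableEquiv.toLp 2 (Fin d → ℝ))

open Real

lemma rpow_le_exp_sub_one_mul {x y : ℝ} (hx : 0 ≤ x) (hy : 0 ≤ y) :
    x ^ y ≤ exp ((x - 1) * y) := by
  rw [exp_mul]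
  exact rpow_le_rpow hx (by linarith [add_one_le_exp (x - 1)]) hy

lemma rpow_le_mul_exp_mul {a p t : ℝ} (ha : 0 ≤ a) (hp : 0 < p) (ht : 0 < t) :
    a ^ p ≤ (p / t) ^ p * exp (-p) * exp (t * a) := by
  calc a ^ p = (p / t) ^ p * (t * a / p) ^ p := by
        rw [← mul_rpow (by positivity) (by positivity)]
        congr 1
        field_simp
    _ ≤ (p / t) ^ p * exp ((t * a / p - 1) * p) := by
        gcongr
        exact rpow_le_exp_sub_one_mul (by positivity) hp.le
    _ = (p / t) ^ p * exp (-p) * exp (t * a) := by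
        rw [mul_assoc, ← exp_add]
        congr 2
        field_simp
        ring

lemma integral_rpow_le_mul_mgf {Ω : Type*} [MeasurableSpace Ω] {μ : Measure Ω} {X : Ω → ℝ}
    {p t : ℝ} (hX : 0 ≤ᵐ[μ] X) (hp : 0 < p) (ht : 0 < t)
    (hint : Integrable (fun ω ↦ exp (t * X ω)) μ) :
    ∫ ω, X ω ^ p ∂μ ≤ (p / t) ^ p * exp (-p) * mgf X μ t := by
  rw [mgf, ← integral_const_mul]
  refine integral_mono_of_nonneg ?_ (hint.const_mul _) ?_ <;> filter_upwards [hX] with ω hω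
  exacts [rpow_nonneg hω p, rpow_le_mul_exp_mul hω hp ht]

lemma mgf_sq_gaussianReal {t : ℝ} (ht : t < 1 / 2) :
    mgf (fun x ↦ x ^ 2) (gaussianReal 0 1) t = √((1 - 2 * t)⁻¹) := by
  have hdensity (x : ℝ) : gaussianPDFReal 0 1 x • exp (t * x ^ 2)
      = (√(2 * π))⁻¹ * exp (-(1 / 2 - t) * x ^ 2) := by
    simp only [gaussianPDFReal, NNReal.coe_one, mul_one, sub_zero, smul_eq_mul, mul_assoc,
      ← exp_add]
    ring_nf
  rw [mgf, integral_gaussianReal_eq_integral_smul one_ne_zero]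
  simp_rw [hdensity]
  rw [integral_const_mul, integral_gaussian, ← sqrt_inv, ← sqrt_mul (by positivity)]
  have h2t : 1 - 2 * t ≠ 0 := by linarith
  congr 1
  field_simp [pi_ne_zero]

lemma mgf_norm_sq_stdGaussianE (d : ℕ) {t : ℝ} (ht : t < 1 / 2) :
    mgf (fun u ↦ ‖u‖ ^ 2) (stdGaussianE d) t = (1 - 2 * t) ^ (-(d / 2 : ℝ)) := by
  have hexp (u : EuclideanSpace ℝ (Fin d)) : exp (t * ‖u‖ ^ 2) = ∏ i, exp (t * u i ^ 2) := by
    rw [EuclideanSpace.norm_sq_eq, Finset.mul_sum, exp_sum]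
    simp
  have hpow : mgf (fun u ↦ ‖u‖ ^ 2) (stdGaussianE d) t
      = mgf (fun x ↦ x ^ 2) (gaussianReal 0 1) t ^ d := by
    simp only [mgf, hexp, stdGaussianE, integral_map_equiv]
    simpa using integral_fintype_prod_eq_pow (ι := Fin d) (fun x : ℝ ↦ exp (t * x ^ 2))
  rw [hpow, mgf_sq_gaussianReal ht, sqrt_eq_rpow, inv_rpow (by linarith), ← rpow_neg (by linarith),
    ← rpow_natCast, ← rpow_mul (by linarith)]
  ring_nf

-- `mgf` is `0` where `exp (t * X)` is not integrable, so a nonzero value certifies integrability.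
lemma integrable_exp_mul_norm_sq_stdGaussianE (d : ℕ) {t : ℝ} (ht : t < 1 / 2) :
    Integrable (fun u ↦ exp (t * ‖u‖ ^ 2)) (stdGaussianE d) := by
  have hpos : mgf (fun u ↦ ‖u‖ ^ 2) (stdGaussianE d) t ≠ 0 := by
    rw [mgf_norm_sq_stdGaussianE d ht]
    exact (rpow_pos_of_pos (by linarith) _).ne'
  exact .of_integral_ne_zero hpos

lemma mgf_norm_sq_stdGaussianE_le_exp {d : ℕ} (hd : 0 < d) {γ : ℝ} (hγ : 0 < γ) :
    mgf (fun u ↦ ‖u‖ ^ 2) (stdGaussianE d) (γ / (2 * (d + γ))) ≤ exp (γ / 2) := by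
  have hd : (0 : ℝ) < d := by exact_mod_cast hd
  have ht : γ / (2 * (d + γ)) < 1 / 2 := by
    rw [div_lt_iff₀ (by positivity)]
    linarith
  have h1t : 1 - 2 * (γ / (2 * (d + γ))) = d / (d + γ) := by
    field_simp
    ring
  calc mgf (fun u ↦ ‖u‖ ^ 2) (stdGaussianE d) (γ / (2 * (d + γ)))
      = ((d + γ) / d) ^ (d / 2 : ℝ) := by
        rw [mgf_norm_sq_stdGaussianE d ht, h1t, rpow_neg (by positivity),
          ← inv_rpow (by positivity), inv_div]
    _ ≤ exp (((d + γ) / d - 1) * (d / 2)) := rpow_le_exp_sub_one_mul (by positivity) (by positivity)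
    _ = exp (γ / 2) := by
        congr 1
        field_simp
        ring

theorem gaussian_norm_moment_bound (d : ℕ) (γ : ℝ) (hγ : 2 ≤ γ) :
    ∫ u, ‖u‖ ^ γ ∂(stdGaussianE d) ≤ ((d : ℝ) + γ) ^ (γ / 2) := by
  have hγ0 : 0 < γ := by linarith
  rcases Nat.eq_zero_or_pos d with rfl | hd
  · have hzero (u : EuclideanSpace ℝ (Fin 0)) : ‖u‖ ^ γ = 0 := by
      rw [Subsingleton.elim u 0, norm_zero, zero_rpow hγ0.ne']
    simp only [hzero, integral_zero]
    positivity
  set t := γ / (2 * (d + γ)) with ht_def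
  have ht : t < 1 / 2 := by
    rw [ht_def, div_lt_iff₀ (by positivity)]
    linarith [(Nat.cast_pos.mpr hd : (0 : ℝ) < d)]
  have hpt : γ / 2 / t = d + γ := by
    rw [ht_def]
    field_simp
  have hnorm (u : EuclideanSpace ℝ (Fin d)) : ‖u‖ ^ γ = (‖u‖ ^ 2) ^ (γ / 2) := by
    rw [← rpow_natCast, ← rpow_mul (norm_nonneg u), Nat.cast_ofNat, mul_div_cancel₀ γ two_ne_zero]
  calc ∫ u, ‖u‖ ^ γ ∂(stdGaussianE d)
      ≤ (γ / 2 / t) ^ (γ / 2) * exp (-(γ / 2)) * mgf (fun u ↦ ‖u‖ ^ 2) (stdGaussianE d) t := by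
        simp only [hnorm]
        exact integral_rpow_le_mul_mgf (ae_of_all _ fun u ↦ by positivity) (by linarith)
          (by positivity) (integrable_exp_mul_norm_sq_stdGaussianE d ht)
    _ ≤ (d + γ) ^ (γ / 2) * exp (-(γ / 2)) * exp (γ / 2) := by
        rw [hpt]
        gcongr
        exact mgf_norm_sq_stdGaussianE_le_exp hd hγ0
    _ = (d + γ) ^ (γ / 2) := by rw [mul_assoc, ← exp_add, neg_add_cancel, exp_zero, mul_one]
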